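/- Let L ≥ 2. The ZMod 2-linear map sending an X-error F : V × Fin 3 → ZMod 2 to the pair of cell syndromes (σ₁(F), σ₂(F)) has rank 2L³ − 3L + 1. (Together with the rank L³ − 3L + 2 of the vertex syndrome map, this gives 3L³ − (L³ − 3L + 2) − (2L³ − 3L + 1) = 6L − 3 encoded logical qubits for the X-cube model on an L × L × L torus, matching the paper's count of logical operator pairs X̄_j, Z̄_j for 1 ≤ j ≤ 6L − 3.) -/

import Mathlib

/-- Positions on the periodic cubic lattice of linear size `L`. -/
abbrev V (L : ℕ) : Type := Fin 3 → ZMod L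

/-- The standard basis vector in direction `i`. -/
def e (L : ℕ) (i : Fin 3) : V L := Pi.single i 1

/-- The two directions/colors different from a given one. -/
def oth : Fin 3 → Fin 3 × Fin 3 := ![(1, 2), (0, 2), (0, 1)]

/-- The `c`-colored cell syndrome of an X-error `F` at the cell `p`. -/
def cellSyn (L : ℕ) (F : V L × Fin 3 → ZMod 2) (c : Fin 3) (p : V L) : ZMod 2 :=
  ∑ i ∈ Finset.univ.filter (fun i : Fin 3 => i ≠ c), (F (p, i) + F (p + e L i, i))

/-- The vertex syndrome of a Z-error `E` at the vertex `v`. -/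
def vertSyn (L : ℕ) (E : V L × Fin 3 → ZMod 2) (v : V L) : ZMod 2 :=
  ∑ i : Fin 3, ∑ a : Fin 2, ∑ b : Fin 2,
    E (v - ((a : ℕ) : ZMod L) • e L (oth i).1 - ((b : ℕ) : ZMod L) • e L (oth i).2, i)

/-- The cell syndrome map `F ↦ (σ₁(F), σ₂(F))` as a `ZMod 2`-linear map. -/
def cellSynMap (L : ℕ) :
    (V L × Fin 3 → ZMod 2) →ₗ[ZMod 2] ((V L → ZMod 2) × (V L → ZMod 2)) where
  toFun F := (cellSyn L F 1, cellSyn L F 2)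
  map_add' F F' := by
    refine Prod.ext ?_ ?_ <;> funext p <;>
      simp [cellSyn, Finset.sum_add_distrib, add_add_add_comm]
  map_smul' c F := by
    refine Prod.ext ?_ ?_ <;> funext p <;>
      simp [cellSyn, Finset.smul_sum, Finset.mul_sum, mul_add]

/-!
The rank of `cellSynMap` equals that of its transpose `T` for the dot products, and
`T (g₁, g₂)` consists of the discrete derivatives of `h₀ = g₁ + g₂`, `h₁ = g₂`, `h₂ = g₁` in the
directions `e₀, e₁, e₂`. So `(g₁, g₂) ∈ ker T` iff each `hᵢ` is constant along direction `i`,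
which forces `g₁ p = a p₀ + b p₁` and `g₂ p = a p₀ + c p₂` for functions `a b c : ZMod L → ZMod 2`.
Only the constant triple `a = b = c = 1` gives `g = 0`, so `dim ker T = 3L - 1` and the rank is
`2L³ - (3L - 1)`.
-/

open Module Function Finset

theorem finrank_range_eq_of_dualMap_comp {K M N M' N' : Type*} [Field K]
    [AddCommGroup M] [Module K M] [AddCommGroup N] [Module K N]
    [AddCommGroup M'] [Module K M'] [AddCommGroup N'] [Module K N']
    (A : M →ₗ[K] N) (T : N' →ₗ[K] M') (eN : N' ≃ₗ[K] Dual K N) (eM : M' ≃ₗ[K] Dual K M)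
    (h : A.dualMap ∘ₗ eN.toLinearMap = eM.toLinearMap ∘ₗ T) :
    finrank K (LinearMap.range A) = finrank K (LinearMap.range T) := by
  rw [← A.finrank_range_dualMap_eq_finrank_range,
    ← LinearMap.range_comp_of_range_eq_top _ eN.range, h, LinearMap.range_comp,
    LinearEquiv.finrank_map_eq]

theorem Pi.basisFun_toDualEquiv_apply {K ι : Type*} [Field K] [Fintype ι] [DecidableEq ι]
    (x y : ι → K) : (Pi.basisFun K ι).toDualEquiv x y = x ⬝ᵥ y := by
  simp [Basis.toDualEquiv_apply, Basis.toDual, dotProduct]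

theorem sum_mul_add_shift {G R : Type*} [AddCommGroup G] [Fintype G] [CommRing R]
    (h F : G → R) (t : G) :
    ∑ p, h p * (F p + F (p + t)) = ∑ q, (h q + h (q - t)) * F q := by
  have hshift : ∑ p, h p * F (p + t) = ∑ q, h (q - t) * F q :=
    Fintype.sum_equiv (Equiv.addRight t) _ _ fun p => by simp
  simp only [mul_add, add_mul, sum_add_distrib, hshift]

section XCube

variable {L : ℕ}

theorem e_apply (i j : Fin 3) : e L i j = if j = i then 1 else 0 := by
  simp [e, Pi.single_apply]

theorem periodic_e_of_forall_ne {g : V L → ZMod 2} {i : Fin 3}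
    (hg : ∀ p q : V L, (∀ j, j ≠ i → p j = q j) → g p = g q) : Periodic g (e L i) :=
  fun p => hg _ _ fun j hj => by simp [e_apply, hj]

theorem Function.Periodic.apply_eq_of_forall_ne [NeZero L] {g : V L → ZMod 2} {i : Fin 3}
    (hg : Periodic g (e L i)) {p q : V L} (hpq : ∀ j, j ≠ i → p j = q j) : g p = g q := by
  have hq : q = p + (q i - p i).val • e L i := by
    funext j
    by_cases hj : j = i
    · subst hj
      rw [Pi.add_apply, Pi.smul_apply, e_apply, if_pos rfl, nsmul_eq_mul, mul_one,
        ZMod.natCast_zmod_val, add_sub_cancel]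
    · simp [e_apply, hj, hpq j hj]
  rw [hq, hg.nsmul]

/-- For `g = (g₁, g₂)`, `colorSum g i` is the sum of the `g_c` over the colors `c ∈ {1, 2}`
different from `i`. -/
def colorSum (g : (V L → ZMod 2) × (V L → ZMod 2)) : Fin 3 → V L → ZMod 2 :=
  ![g.1 + g.2, g.2, g.1]

variable (L) in
def cellSynMapTranspose :
    ((V L → ZMod 2) × (V L → ZMod 2)) →ₗ[ZMod 2] (V L × Fin 3 → ZMod 2) where
  toFun g qi := colorSum g qi.2 qi.1 + colorSum g qi.2 (qi.1 - e L qi.2)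
  map_add' g g' := by
    funext ⟨q, i⟩
    fin_cases i <;> simp [colorSum, add_add_add_comm]
  map_smul' c g := by
    funext ⟨q, i⟩
    fin_cases i <;> simp [colorSum, mul_add]

theorem sum_mul_cellSyn_add_sum_mul_cellSyn [NeZero L]
    (g : (V L → ZMod 2) × (V L → ZMod 2)) (F : V L × Fin 3 → ZMod 2) :
    ∑ p, g.1 p * cellSyn L F 1 p + ∑ p, g.2 p * cellSyn L F 2 p
      = ∑ qi, cellSynMapTranspose L g qi * F qi := by
  have hpoint : ∀ p, g.1 p * cellSyn L F 1 p + g.2 p * cellSyn L F 2 p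
      = ∑ i, colorSum g i p * (F (p, i) + F (p + e L i, i)) := by
    intro p
    simp only [cellSyn, colorSum, sum_filter, Fin.sum_univ_three, ne_eq, ite_not, Fin.reduceEq,
      zero_ne_one, ↓reduceIte, add_zero, Matrix.cons_val_zero, Matrix.cons_val_one,
      Matrix.cons_val, Pi.add_apply]
    ring
  calc ∑ p, g.1 p * cellSyn L F 1 p + ∑ p, g.2 p * cellSyn L F 2 p
      = ∑ i, ∑ p, colorSum g i p * (F (p, i) + F (p + e L i, i)) := by
        rw [← sum_add_distrib, sum_comm]
        exact sum_congr rfl fun p _ => hpoint p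
    _ = ∑ i, ∑ q, (colorSum g i q + colorSum g i (q - e L i)) * F (q, i) := by
        simp only [sum_mul_add_shift]
    _ = ∑ qi, cellSynMapTranspose L g qi * F qi := by
        rw [Fintype.sum_prod_type_right]
        rfl

theorem finrank_range_cellSynMap [NeZero L] :
    finrank (ZMod 2) (LinearMap.range (cellSynMap L))
      = finrank (ZMod 2) (LinearMap.range (cellSynMapTranspose L)) := by
  let dotDual := (Pi.basisFun (ZMod 2) (V L)).toDualEquiv
  refine finrank_range_eq_of_dualMap_comp _ _
    ((dotDual.prodCongr dotDual).trans (dualProdDualEquivDual _ _ _))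
    (Pi.basisFun (ZMod 2) (V L × Fin 3)).toDualEquiv ?_
  refine LinearMap.ext fun g => LinearMap.ext fun F => ?_
  simp only [LinearMap.comp_apply, LinearEquiv.coe_coe, LinearMap.dualMap_apply,
    LinearEquiv.trans_apply, LinearEquiv.prodCongr_apply, dualProdDualEquivDual_apply,
    LinearMap.coprod_apply, dotDual, Pi.basisFun_toDualEquiv_apply, dotProduct]
  exact sum_mul_cellSyn_add_sum_mul_cellSyn g F

theorem mem_ker_cellSynMapTranspose {g : (V L → ZMod 2) × (V L → ZMod 2)} :
    g ∈ LinearMap.ker (cellSynMapTranspose L) ↔ ∀ i, Periodic (colorSum g i) (e L i) := by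
  rw [LinearMap.mem_ker]
  constructor
  · intro hg i p
    have : colorSum g i (p + e L i) + colorSum g i (p + e L i - e L i) = 0 :=
      congrFun hg (p + e L i, i)
    rwa [add_sub_cancel_right, CharTwo.add_eq_zero] at this
  · intro hg
    funext ⟨q, i⟩
    show colorSum g i q + colorSum g i (q - e L i) = 0
    rw [← hg i (q - e L i), sub_add_cancel, CharTwo.add_self_eq_zero]

variable (L) in
def planeComb : (Fin 3 → ZMod L → ZMod 2) →ₗ[ZMod 2] ((V L → ZMod 2) × (V L → ZMod 2)) where
  toFun f := (fun p => f 0 (p 0) + f 1 (p 1), fun p => f 0 (p 0) + f 2 (p 2))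
  map_add' f f' := by
    ext p <;> simp only [Pi.add_apply, Prod.fst_add, Prod.snd_add] <;> ring
  map_smul' c f := by
    ext p <;> simp only [Pi.smul_apply, smul_eq_mul, RingHom.id_apply, Prod.smul_fst,
      Prod.smul_snd] <;> ring

theorem colorSum_planeComb (f : Fin 3 → ZMod L → ZMod 2) :
    colorSum (planeComb L f) =
      ![fun p => f 1 (p 1) + f 2 (p 2), fun p => f 0 (p 0) + f 2 (p 2),
        fun p => f 0 (p 0) + f 1 (p 1)] := by
  funext i p
  fin_cases i
  · show f 0 (p 0) + f 1 (p 1) + (f 0 (p 0) + f 2 (p 2)) = f 1 (p 1) + f 2 (p 2)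
    grind
  all_goals rfl

theorem range_planeComb_le_ker_cellSynMapTranspose :
    LinearMap.range (planeComb L) ≤ LinearMap.ker (cellSynMapTranspose L) := by
  rintro _ ⟨f, rfl⟩
  rw [mem_ker_cellSynMapTranspose, colorSum_planeComb]
  intro i
  refine periodic_e_of_forall_ne fun p q hpq => ?_
  fin_cases i <;> simp [hpq 0, hpq 1, hpq 2]

theorem ker_cellSynMapTranspose_le_range_planeComb [NeZero L] :
    LinearMap.ker (cellSynMapTranspose L) ≤ LinearMap.range (planeComb L) := by
  intro g hg
  rw [mem_ker_cellSynMapTranspose] at hg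
  have P0 : Periodic (g.1 + g.2) (e L 0) := hg 0
  have P1 : Periodic g.2 (e L 1) := hg 1
  have P2 : Periodic g.1 (e L 2) := hg 2
  refine ⟨![fun t => g.2 ![t, 0, 0], fun s => g.1 ![0, s, 0] + g.2 0,
    fun u => g.2 ![0, 0, u] + g.2 0], ?_⟩
  ext p
  · have h1 : g.1 p = g.1 ![p 0, p 1, 0] :=
      P2.apply_eq_of_forall_ne fun j hj => by fin_cases j <;> simp_all
    have h2 : (g.1 + g.2) ![p 0, p 1, 0] = (g.1 + g.2) ![0, p 1, 0] :=
      P0.apply_eq_of_forall_ne fun j hj => by fin_cases j <;> simp_all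
    have h3 : g.2 ![p 0, p 1, 0] = g.2 ![p 0, 0, 0] :=
      P1.apply_eq_of_forall_ne fun j hj => by fin_cases j <;> simp_all
    have h4 : g.2 ![0, p 1, 0] = g.2 0 :=
      P1.apply_eq_of_forall_ne fun j hj => by fin_cases j <;> simp_all
    simp only [planeComb, LinearMap.coe_mk, AddHom.coe_mk, Pi.add_apply, Matrix.cons_val_zero,
      Matrix.cons_val_one, Matrix.cons_val] at h2 ⊢
    grind
  · have h1 : g.2 p = g.2 ![p 0, 0, p 2] :=
      P1.apply_eq_of_forall_ne fun j hj => by fin_cases j <;> simp_all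
    have h2 : (g.1 + g.2) ![p 0, 0, p 2] = (g.1 + g.2) ![0, 0, p 2] :=
      P0.apply_eq_of_forall_ne fun j hj => by fin_cases j <;> simp_all
    have h3 : g.1 ![p 0, 0, p 2] = g.1 ![p 0, 0, 0] :=
      P2.apply_eq_of_forall_ne fun j hj => by fin_cases j <;> simp_all
    have h4 : g.1 ![0, 0, p 2] = g.1 0 :=
      P2.apply_eq_of_forall_ne fun j hj => by fin_cases j <;> simp_all
    have h5 : (g.1 + g.2) ![p 0, 0, 0] = (g.1 + g.2) 0 :=
      P0.apply_eq_of_forall_ne fun j hj => by fin_cases j <;> simp_all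
    simp only [planeComb, LinearMap.coe_mk, AddHom.coe_mk, Pi.add_apply, Matrix.cons_val_zero,
      Matrix.cons_val_one, Matrix.cons_val] at h2 h5 ⊢
    grind

theorem ker_cellSynMapTranspose [NeZero L] :
    LinearMap.ker (cellSynMapTranspose L) = LinearMap.range (planeComb L) :=
  le_antisymm ker_cellSynMapTranspose_le_range_planeComb
    range_planeComb_le_ker_cellSynMapTranspose

theorem ker_planeComb :
    LinearMap.ker (planeComb L) = Submodule.span (ZMod 2) {fun _ _ => 1} := by
  apply le_antisymm
  · intro f hf
    have h1 : ∀ s t, f 0 s + f 1 t = 0 := fun s t => congrFun (congrArg Prod.fst hf) ![s, t, 0]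
    have h2 : ∀ s u, f 0 s + f 2 u = 0 := fun s u => congrFun (congrArg Prod.snd hf) ![s, 0, u]
    refine Submodule.mem_span_singleton.mpr ⟨f 0 0, ?_⟩
    funext i t
    have := h1 t 0
    have := h1 0 0
    have := h1 0 t
    have := h2 0 t
    fin_cases i <;> simp <;> grind
  · rw [Submodule.span_le, Set.singleton_subset_iff, SetLike.mem_coe, LinearMap.mem_ker]
    ext p <;> exact CharTwo.add_self_eq_zero 1

theorem finrank_range_planeComb [NeZero L] :
    finrank (ZMod 2) (LinearMap.range (planeComb L)) = 3 * L - 1 := by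
  have hker : finrank (ZMod 2) (LinearMap.ker (planeComb L)) = 1 :=
    ker_planeComb ▸ finrank_span_singleton fun h => one_ne_zero (congrFun (congrFun h 0) 0)
  have := (planeComb L).finrank_range_add_finrank_ker
  rw [hker, finrank_pi_fintype, Fin.sum_univ_three, finrank_pi, ZMod.card] at this
  omega

end XCube

/-- The cell syndrome map `F ↦ (σ₁(F), σ₂(F))` has rank `2L³ − 3L + 1`,
giving `6L − 3` encoded logical qubits for the X-cube model. -/
theorem stmt_15 (L : ℕ) [NeZero L] (hL : 2 ≤ L) :
    Module.finrank (ZMod 2) (LinearMap.range (cellSynMap L)) = 2 * L ^ 3 - 3 * L + 1 := by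
  have hdim : finrank (ZMod 2) ((V L → ZMod 2) × (V L → ZMod 2)) = 2 * L ^ 3 := by
    rw [finrank_prod, finrank_pi, Fintype.card_fun, ZMod.card, Fintype.card_fin]
    ring
  have hrank := (cellSynMapTranspose L).finrank_range_add_finrank_ker
  rw [ker_cellSynMapTranspose, finrank_range_planeComb, hdim] at hrank
  have hL3 : 3 * L ≤ 2 * L ^ 3 := by nlinarith [Nat.mul_le_mul hL hL]
  rw [finrank_range_cellSynMap]
  omega
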